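/- Let A : H → F be a bounded operator and w : H → H positive semidefinite. Define Â : H → F ⊕ H by Âh = (Ah, h) and let W = diag(I, w) on F ⊕ H. Then Â admits a W-inverse if and only if A admits a W-optimal inverse, i.e. if and only if the equation (A*A + w)X = A* admits a bounded solution. -/

import Mathlib

/-!
The functional `z ↦ ‖Az − f‖² + ⟨w(z − g), z − g⟩` is a quadratic with positive Hessian
`A*A + w`, so its minimizers are exactly the solutions of the normal equation
`(A*A + w)z = A*f + wg`. Hence `G` is a `W`-optimal inverse iff `(A*A + w)G = A*`. Restricting a
`W`-inverse of `Â` to `F × {0}` gives a `W`-optimal inverse; conversely, `(A*A + w)X = A*`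
forces `(A*A + w)(I − XA) = w`, so `(f, g) ↦ Xf + (I − XA)g` is a `W`-inverse of `Â`.
-/

open RCLike ContinuousLinearMap
open scoped InnerProductSpace

section QuadraticExpansion

variable {𝕜 H : Type*} [RCLike 𝕜] [NormedAddCommGroup H] [InnerProductSpace 𝕜 H]

theorem forall_le_iff_eq_zero_of_quadratic_expansion {J : H → ℝ} {T : H →L[𝕜] H}
    (hT : ∀ u, 0 ≤ re ⟪T u, u⟫_𝕜) {x r : H}
    (hJ : ∀ u, J (x + u) = J x + 2 * re ⟪r, u⟫_𝕜 + re ⟪T u, u⟫_𝕜) :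
    (∀ z, J x ≤ J z) ↔ r = 0 := by
  refine ⟨fun hmin => ?_, fun hr z => ?_⟩
  · -- along the ray `x + t r` the increment of `J` is `2t‖r‖² + t² re⟪T r, r⟫`
    have hquad : ∀ t : ℝ, 0 ≤ re ⟪T r, r⟫_𝕜 * (t * t) + 2 * ‖r‖ ^ 2 * t + 0 := by
      intro t
      have := hJ ((t : 𝕜) • r) ▸ hmin (x + (t : 𝕜) • r)
      simp only [map_smul, inner_smul_left, inner_smul_right, conj_ofReal, re_ofReal_mul,
        inner_self_eq_norm_sq] at this
      linarith
    have := discrim_le_zero hquad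
    simp only [discrim, mul_zero, sub_zero] at this
    simpa using this
  · have hz := hJ (z - x)
    rw [add_sub_cancel, hr, inner_zero_left, map_zero, mul_zero, add_zero] at hz
    linarith [hT (z - x)]

end QuadraticExpansion

section PenalizedLeastSquares

variable {𝕜 H F : Type*} [RCLike 𝕜] [NormedAddCommGroup H] [InnerProductSpace 𝕜 H]
  [CompleteSpace H] [NormedAddCommGroup F] [InnerProductSpace 𝕜 F] [CompleteSpace F]

/-- `‖Âz − (f, g)‖²_W`, where `Âz = (Az, z)` and `W = diag(I, w)`. -/
def penalizedResidual (A : H →L[𝕜] F) (w : H →L[𝕜] H) (f : F) (g z : H) : ℝ :=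
  ‖A z - f‖ ^ 2 + re ⟪w (z - g), z - g⟫_𝕜

theorem penalizedResidual_add {A : H →L[𝕜] F} {w : H →L[𝕜] H} (hw : IsSelfAdjoint w)
    (f : F) (g x u : H) :
    penalizedResidual A w f g (x + u) = penalizedResidual A w f g x
      + 2 * re ⟪(adjoint A ∘L A + w) x - (adjoint A f + w g), u⟫_𝕜
      + re ⟪(adjoint A ∘L A + w) u, u⟫_𝕜 := by
  have hgrad : (adjoint A ∘L A + w) x - (adjoint A f + w g) = adjoint A (A x - f) + w (x - g) := by
    simp only [add_apply, comp_apply, map_sub]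
    abel
  have hsymm : re ⟪w u, x - g⟫_𝕜 = re ⟪w (x - g), u⟫_𝕜 := by
    rw [inner_re_symm, ← coe_coe, hw.isSymmetric, coe_coe]
  rw [hgrad, penalizedResidual, penalizedResidual, map_add, add_sub_right_comm,
    show x + u - g = x - g + u by abel, norm_add_sq (𝕜 := 𝕜), map_add, inner_add_left,
    inner_add_right, inner_add_right, add_apply, comp_apply, inner_add_left, inner_add_left,
    adjoint_inner_left, adjoint_inner_left]
  simp only [map_add, hsymm, inner_self_eq_norm_sq]
  ring

theorem penalizedResidual_le_iff {A : H →L[𝕜] F} {w : H →L[𝕜] H} (hw : w.IsPositive)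
    (f : F) (g x : H) :
    (∀ z, penalizedResidual A w f g x ≤ penalizedResidual A w f g z) ↔
      (adjoint A ∘L A + w) x = adjoint A f + w g := by
  rw [← sub_eq_zero]
  exact forall_le_iff_eq_zero_of_quadratic_expansion
    ((isPositive_adjoint_comp_self A).add hw).re_inner_nonneg_left
    (penalizedResidual_add hw.isSelfAdjoint f g x)

def IsWOptimalInverse (A : H →L[𝕜] F) (w : H →L[𝕜] H) (G : F →L[𝕜] H) : Prop :=
  ∀ f z, penalizedResidual A w f 0 (G f) ≤ penalizedResidual A w f 0 z

/-- `G'` is a `W`-inverse of `Â`. -/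
def IsWInverse (A : H →L[𝕜] F) (w : H →L[𝕜] H) (G' : F × H →L[𝕜] H) : Prop :=
  ∀ ξ z, penalizedResidual A w ξ.1 ξ.2 (G' ξ) ≤ penalizedResidual A w ξ.1 ξ.2 z

theorem isWOptimalInverse_iff (A : H →L[𝕜] F) {w : H →L[𝕜] H} (hw : w.IsPositive)
    (G : F →L[𝕜] H) : IsWOptimalInverse A w G ↔ (adjoint A ∘L A + w) ∘L G = adjoint A := by
  simp only [IsWOptimalInverse, penalizedResidual_le_iff hw, map_zero, add_zero,
    ContinuousLinearMap.ext_iff, comp_apply]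

theorem adjoint_comp_self_add_comp_id_sub_comp {A : H →L[𝕜] F} {w : H →L[𝕜] H} {X : F →L[𝕜] H}
    (hX : (adjoint A ∘L A + w) ∘L X = adjoint A) :
    (adjoint A ∘L A + w) ∘L (ContinuousLinearMap.id 𝕜 H - X ∘L A) = w := by
  rw [comp_sub, comp_id, ← comp_assoc, hX, add_sub_cancel_left]

theorem exists_isWInverse_iff (A : H →L[𝕜] F) {w : H →L[𝕜] H} (hw : w.IsPositive) :
    (∃ G', IsWInverse A w G') ↔ ∃ X, (adjoint A ∘L A + w) ∘L X = adjoint A := by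
  refine ⟨fun ⟨G', hG'⟩ => ⟨G' ∘L inl 𝕜 F H, ?_⟩, fun ⟨X, hX⟩ => ?_⟩
  · exact (isWOptimalInverse_iff A hw _).mp fun f z => by simpa using hG' (f, 0) z
  · set G' := X ∘L fst 𝕜 F H + (ContinuousLinearMap.id 𝕜 H - X ∘L A) ∘L snd 𝕜 F H
    have hG' : (adjoint A ∘L A + w) ∘L G' = adjoint A ∘L fst 𝕜 F H + w ∘L snd 𝕜 F H := by
      rw [comp_add, ← comp_assoc, ← comp_assoc, hX, adjoint_comp_self_add_comp_id_sub_comp hX]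
    exact ⟨G', fun ξ => (penalizedResidual_le_iff hw _ _ _).mpr congr($hG' ξ)⟩

end PenalizedLeastSquares

theorem stmt_15_general {H F : Type*} [NormedAddCommGroup H] [InnerProductSpace ℂ H] [CompleteSpace H]
    [NormedAddCommGroup F] [InnerProductSpace ℂ F] [CompleteSpace F]
    (A : H →L[ℂ] F) (w : H →L[ℂ] H) (hw : w.IsPositive) :
    ((∃ G' : (F × H) →L[ℂ] H, ∀ (ξ : F × H) (z : H),
        ‖A (G' ξ) - ξ.1‖ ^ 2 + (inner ℂ (w (G' ξ - ξ.2)) (G' ξ - ξ.2) : ℂ).re ≤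
          ‖A z - ξ.1‖ ^ 2 + (inner ℂ (w (z - ξ.2)) (z - ξ.2) : ℂ).re) ↔
      (∃ G : F →L[ℂ] H, ∀ (f : F) (z : H),
        ‖A (G f) - f‖ ^ 2 + (inner ℂ (w (G f)) (G f) : ℂ).re ≤
          ‖A z - f‖ ^ 2 + (inner ℂ (w z) z : ℂ).re)) ∧
    ((∃ G : F →L[ℂ] H, ∀ (f : F) (z : H),
        ‖A (G f) - f‖ ^ 2 + (inner ℂ (w (G f)) (G f) : ℂ).re ≤
          ‖A z - f‖ ^ 2 + (inner ℂ (w z) z : ℂ).re) ↔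
      (∃ X : F →L[ℂ] H,
        (ContinuousLinearMap.adjoint A ∘L A + w) ∘L X = ContinuousLinearMap.adjoint A)) := by
  have hopt := exists_congr (isWOptimalInverse_iff A hw)
  have hinv := exists_isWInverse_iff A hw
  simp only [IsWOptimalInverse, IsWInverse, penalizedResidual, sub_zero, re_to_complex]
    at hopt hinv
  exact ⟨hinv.trans hopt.symm, hopt⟩

/-- For `W = diag(I, w)`, `Â` admits a `W`-inverse iff `A` admits a `W`-optimal inverse,
iff `(A*A + w)X = A*` has a bounded solution. -/
theorem stmt_15 {H F : Type*} [NormedAddCommGroup H] [InnerProductSpace ℂ H] [CompleteSpace H]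
    [NormedAddCommGroup F] [InnerProductSpace ℂ F] [CompleteSpace F]
    [TopologicalSpace.SeparableSpace H] [TopologicalSpace.SeparableSpace F]
    (A : H →L[ℂ] F) (w : H →L[ℂ] H) (hw : w.IsPositive) :
    ((∃ G' : (F × H) →L[ℂ] H, ∀ (ξ : F × H) (z : H),
        ‖A (G' ξ) - ξ.1‖ ^ 2 + (inner ℂ (w (G' ξ - ξ.2)) (G' ξ - ξ.2) : ℂ).re ≤
          ‖A z - ξ.1‖ ^ 2 + (inner ℂ (w (z - ξ.2)) (z - ξ.2) : ℂ).re) ↔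
      (∃ G : F →L[ℂ] H, ∀ (f : F) (z : H),
        ‖A (G f) - f‖ ^ 2 + (inner ℂ (w (G f)) (G f) : ℂ).re ≤
          ‖A z - f‖ ^ 2 + (inner ℂ (w z) z : ℂ).re)) ∧
    ((∃ G : F →L[ℂ] H, ∀ (f : F) (z : H),
        ‖A (G f) - f‖ ^ 2 + (inner ℂ (w (G f)) (G f) : ℂ).re ≤
          ‖A z - f‖ ^ 2 + (inner ℂ (w z) z : ℂ).re) ↔
      (∃ X : F →L[ℂ] H,
        (ContinuousLinearMap.adjoint A ∘L A + w) ∘L X = ContinuousLinearMap.adjoint A)) :=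
  stmt_15_general A w hw
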